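/- For every matrix power series k(z) = Σ_{j=0}^∞ K_j z^j with real s×s matrix coefficients satisfying Σ_{j=0}^∞ j‖K_j‖ < ∞, there exists a decomposition k(z) = k(1) + (1 − z) k*(z), where k*(z) = Σ_{j=0}^∞ K*_j z^j with K*_j = −Σ_{i=j+1}^∞ K_i, and the coefficients of k* are absolutely summable: Σ_{j=0}^∞ ‖K*_j‖ < ∞ (Beveridge–Nelson decomposition). -/

import Mathlib

/- Operator 2-norm of a real matrix (a matrix norm). -/
noncomputable def opNorm2 {m n : ℕ} (M : Matrix (Fin m) (Fin n) ℝ) : ℝ :=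
  ‖LinearMap.toContinuousLinearMap (Matrix.toEuclideanLin M)‖

/-!
With `K*_j = -∑_{i > j} K_i` the identities `K_0 = k(1) + K*_0` and `K_{j+1} = K*_{j+1} - K*_j`
telescope, and Abel summation turns them into `k(z) = k(1) + (1 - z) k*(z)` for `|z| ≤ 1`.
Absolute summability of `K*` comes from exchanging the order of summation in
`∑_j ∑_{i > j} ‖K_i‖ = ∑_i i ‖K_i‖`. This works in any Banach space, and `opNorm2` is the norm of
`Matrix.Norms.L2Operator`, whose topology is the entrywise one, so the entrywise claims follow.
-/

open Finset

theorem summable_of_summable_nat_mul {g : ℕ → ℝ} (hg : 0 ≤ g)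
    (h : Summable fun n : ℕ => (n : ℝ) * g n) : Summable g :=
  Summable.of_norm_bounded_eventually_nat h <| by
    filter_upwards [Filter.eventually_ge_atTop 1] with n hn
    rw [Real.norm_of_nonneg (hg n)]
    exact le_mul_of_one_le_left (hg n) (by exact_mod_cast hn)

theorem summable_tsum_add_of_summable_nat_mul {g : ℕ → ℝ} (hg : 0 ≤ g)
    (h : Summable fun n : ℕ => (n : ℝ) * g n) : Summable fun j => ∑' i, g (j + 1 + i) := by
  have hdiag (n : ℕ) :
      ∑' x : antidiagonal n, g (x.1.1 + 1 + x.1.2) = ((n + 1 : ℕ) : ℝ) * g (n + 1) := by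
    rw [tsum_congr fun x : antidiagonal n => by rw [add_right_comm, mem_antidiagonal.1 x.2],
      tsum_const, Nat.card_eq_fintype_card, Fintype.card_coe, Nat.card_antidiagonal, nsmul_eq_mul]
  have hprod : Summable fun p : ℕ × ℕ => g (p.1 + 1 + p.2) := by
    rw [← HasAntidiagonal.sigmaAntidiagonalEquivProd.summable_iff]
    refine (summable_sigma_of_nonneg fun _ => hg _).2 ⟨fun n => Summable.of_finite, ?_⟩
    simpa only [Function.comp_def, HasAntidiagonal.sigmaAntidiagonalEquivProd_apply, hdiag]
      using (summable_nat_add_iff 1).2 h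
  exact ((summable_prod_of_nonneg fun _ => hg _).1 hprod).2

theorem Summable.comp_const_add {E : Type*} [AddCommGroup E] [TopologicalSpace E]
    [IsTopologicalAddGroup E] {f : ℕ → E} (hf : Summable f) (k : ℕ) :
    Summable fun i => f (k + i) :=
  ((summable_nat_add_iff k).2 hf).congr fun i => by rw [add_comm]

theorem HasSum.matrix_apply {ι m n R : Type*} [AddCommMonoid R] [TopologicalSpace R]
    {f : ι → Matrix m n R} {A : Matrix m n R} (hf : HasSum f A) (a : m) (b : n) :
    HasSum (fun j => f j a b) (A a b) :=
  Pi.hasSum.1 (Pi.hasSum.1 hf a) b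

theorem Matrix.tsum_apply {ι m n R : Type*} [AddCommMonoid R] [TopologicalSpace R] [T2Space R]
    {f : ι → Matrix m n R} (hf : Summable f) (a : m) (b : n) :
    (∑' j, f j) a b = ∑' j, f j a b :=
  (hf.hasSum.matrix_apply a b).tsum_eq.symm

section L2Operator

open scoped Matrix.Norms.L2Operator

theorem opNorm2_eq_norm {m n : ℕ} (M : Matrix (Fin m) (Fin n) ℝ) : opNorm2 M = ‖M‖ :=
  rfl

end L2Operator

namespace BeveridgeNelson

section Algebraic

variable {E : Type*} [AddCommGroup E] [TopologicalSpace E] [IsTopologicalAddGroup E] {K : ℕ → E}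

noncomputable def starCoeff (K : ℕ → E) (j : ℕ) : E := -∑' i, K (j + 1 + i)

variable [T2Space E]

theorem starCoeff_succ_sub_starCoeff (hK : Summable K) (j : ℕ) :
    starCoeff K (j + 1) - starCoeff K j = K (j + 1) := by
  have hshift : ∑' i, K (j + 1 + (i + 1)) = ∑' i, K (j + 1 + 1 + i) :=
    tsum_congr fun i => by rw [add_comm i 1, ← add_assoc]
  rw [starCoeff, starCoeff, (hK.comp_const_add (j + 1)).tsum_eq_zero_add, hshift, add_zero]
  abel

theorem tsum_add_starCoeff_zero (hK : Summable K) : ∑' j, K j + starCoeff K 0 = K 0 := by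
  have hshift : ∑' i, K (0 + 1 + i) = ∑' i, K (i + 1) :=
    tsum_congr fun i => by rw [zero_add, add_comm]
  rw [starCoeff, hK.tsum_eq_zero_add, hshift]
  abel

theorem tsum_pow_smul_eq_tsum_add_smul {R : Type*} [Ring R] [Module R E] [ContinuousConstSMul R E]
    (z : R) (hK : Summable K) (hKz : Summable fun j => z ^ j • K j)
    (hSz : Summable fun j => z ^ j • starCoeff K j) :
    ∑' j, z ^ j • K j = ∑' j, K j + (1 - z) • ∑' j, z ^ j • starCoeff K j := by
  set S := starCoeff K
  have hSz_succ : Summable fun j => z ^ (j + 1) • S (j + 1) :=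
    (summable_nat_add_iff (f := fun j => z ^ j • S j) 1).2 hSz
  calc ∑' j, z ^ j • K j = K 0 + ∑' j, (z ^ (j + 1) • S (j + 1) - z • z ^ j • S j) := by
        rw [hKz.tsum_eq_zero_add, pow_zero, one_smul]
        congr 1
        refine tsum_congr fun j => ?_
        rw [← starCoeff_succ_sub_starCoeff hK j, smul_sub, pow_succ', mul_smul, mul_smul]
    _ = K 0 + ((∑' j, z ^ j • S j - S 0) - z • ∑' j, z ^ j • S j) := by
        rw [hSz_succ.tsum_sub (hSz.const_smul z), hSz.tsum_const_smul, hSz.tsum_eq_zero_add,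
          pow_zero, one_smul]
        abel
    _ = ∑' j, K j + (1 - z) • ∑' j, z ^ j • S j := by
        rw [← tsum_add_starCoeff_zero hK, sub_smul, one_smul]
        abel

end Algebraic

section Normed

variable {E : Type*} [NormedAddCommGroup E] {K : ℕ → E}

theorem norm_starCoeff_le (hK : Summable fun j => ‖K j‖) (j : ℕ) :
    ‖starCoeff K j‖ ≤ ∑' i, ‖K (j + 1 + i)‖ := by
  rw [starCoeff, norm_neg]
  exact norm_tsum_le_tsum_norm (hK.comp_const_add (j + 1))

theorem summable_norm_starCoeff (hK : Summable fun j : ℕ => (j : ℝ) * ‖K j‖) :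
    Summable fun j => ‖starCoeff K j‖ :=
  Summable.of_nonneg_of_le (fun _ => norm_nonneg _)
    (norm_starCoeff_le (summable_of_summable_nat_mul (fun _ => norm_nonneg _) hK))
    (summable_tsum_add_of_summable_nat_mul (fun _ => norm_nonneg _) hK)

variable [CompleteSpace E] {𝕜 : Type*} [NormedDivisionRing 𝕜] [Module 𝕜 E] [NormSMulClass 𝕜 E]
  {z : 𝕜}

theorem summable_pow_smul_of_norm_le_one {f : ℕ → E} (hf : Summable fun j => ‖f j‖)
    (hz : ‖z‖ ≤ 1) : Summable fun j => z ^ j • f j :=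
  Summable.of_norm_bounded hf fun j => by
    rw [norm_smul, norm_pow]
    exact mul_le_of_le_one_left (norm_nonneg _) (pow_le_one₀ (norm_nonneg _) hz)

theorem tsum_pow_smul_eq_of_norm_le_one (hK : Summable fun j : ℕ => (j : ℝ) * ‖K j‖)
    (hz : ‖z‖ ≤ 1) :
    ∑' j, z ^ j • K j = ∑' j, K j + (1 - z) • ∑' j, z ^ j • starCoeff K j :=
  have hnorm := summable_of_summable_nat_mul (fun _ => norm_nonneg _) hK
  tsum_pow_smul_eq_tsum_add_smul z hnorm.of_norm (summable_pow_smul_of_norm_le_one hnorm hz)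
    (summable_pow_smul_of_norm_le_one (summable_norm_starCoeff hK) hz)

end Normed

end BeveridgeNelson

/-- **Beveridge–Nelson decomposition.**
For every matrix power series `k(z) = ∑ K j z^j` with real `s×s` matrix coefficients
satisfying `∑ j ‖K j‖ < ∞`, setting `K* j = -∑_{i ≥ j+1} K i` one has:
the coefficients of `k*` are absolutely summable, the coefficients of `k` are absolutely
summable (so that `k(1) = ∑ K j` converges absolutely), the coefficient identity
`k(z) = k(1) + (1 - z) k*(z)` holds formally (i.e. `K 0 = k(1) + K* 0` and
`K j = K* j - K* (j-1)` for `j ≥ 1`), and the analytic identity holds for all `|z| ≤ 1`. -/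
theorem beveridge_nelson (s : ℕ) (K : ℕ → Matrix (Fin s) (Fin s) ℝ)
    (hsum : Summable (fun j : ℕ => (j : ℝ) * opNorm2 (K j))) :
    ∃ Kstar : ℕ → Matrix (Fin s) (Fin s) ℝ,
      (∀ j : ℕ, ∀ a b : Fin s, Kstar j a b = -∑' i : ℕ, K (j + 1 + i) a b) ∧
      Summable (fun j : ℕ => opNorm2 (K j)) ∧
      Summable (fun j : ℕ => opNorm2 (Kstar j)) ∧
      (∀ a b : Fin s, K 0 a b = (∑' j : ℕ, K j a b) + Kstar 0 a b) ∧
      (∀ j : ℕ, K (j + 1) = Kstar (j + 1) - Kstar j) ∧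
      (∀ z : ℝ, |z| ≤ 1 → ∀ a b : Fin s,
        ∑' j : ℕ, K j a b * z ^ j
          = (∑' j : ℕ, K j a b) + (1 - z) * ∑' j : ℕ, Kstar j a b * z ^ j) := by
  open BeveridgeNelson Matrix.Norms.L2Operator in
  simp only [opNorm2_eq_norm] at hsum ⊢
  have hnorm : Summable fun j => ‖K j‖ := summable_of_summable_nat_mul (fun _ => norm_nonneg _) hsum
  have hK : Summable K := hnorm.of_norm
  refine ⟨starCoeff K, fun j a b => ?_, hnorm, summable_norm_starCoeff hsum, fun a b => ?_,
    fun j => (starCoeff_succ_sub_starCoeff hK j).symm, fun z hz a b => ?_⟩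
  · rw [starCoeff, Matrix.neg_apply, Matrix.tsum_apply (hK.comp_const_add (j + 1))]
  · rw [← Matrix.tsum_apply hK, ← Matrix.add_apply, tsum_add_starCoeff_zero hK]
  · rw [← Real.norm_eq_abs] at hz
    have hKz := summable_pow_smul_of_norm_le_one hnorm hz
    have hSz := summable_pow_smul_of_norm_le_one (summable_norm_starCoeff hsum) hz
    have hdecomp := congr($(tsum_pow_smul_eq_of_norm_le_one hsum hz) a b)
    rw [Matrix.tsum_apply hKz, Matrix.add_apply, Matrix.smul_apply, Matrix.tsum_apply hK,
      Matrix.tsum_apply hSz] at hdecomp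
    simpa only [Matrix.smul_apply, smul_eq_mul, mul_comm] using hdecomp
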